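/- arXiv:1207.5546 — 2 statements merged into one kernel-verified Lean document; each statement's English description precedes it below -/
import Mathlib

section
/- If L ∈ GL(n,ℝ) has all eigenvalues of the same modulus, then for every ℓ ≥ 1 the cocycle generated by L admits no ℓ-dominated splitting into nonzero invariant subspaces E ⊕ F. Prove this in the diagonalizable case: if L is diagonalizable over ℂ with all eigenvalues of modulus r > 0, then for any L-invariant decomposition ℝⁿ = E ⊕ F with E, F ≠ 0 and any ℓ ≥ 1, ‖Lˡ|_E‖ · ‖(Lˡ|_F)^{-1}‖ ≥ 1. -/
/-!
A nonzero `L`-invariant subspace `S` has a nonzero invariant complexification, which therefore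
contains a complex eigenvector `w` of `L`, with eigenvalue `μ` of modulus `r`. The real parts
`Re (c • w)`, `c ∈ ℂ`, lie in `S` and satisfy `Lˡ Re (c • w) = Re (c μˡ • w)`. For the sup norm,
`‖Re z‖ ≤ ‖z‖`, with equality after rotating `z` by a suitable unit `c`. Rotating so as to realise
the norm of `μˡ • w` gives a unit vector of `E` stretched by at least `rˡ`; rotating so as to
realise the norm of `w` gives a unit vector of `F` stretched by at most `rˡ`.
-/

open Matrix Module.End

theorem Module.End.exists_hasEigenvector_mem {K V : Type*} [Field K] [IsAlgClosed K]
    [AddCommGroup V] [Module K V] [FiniteDimensional K V] (f : End K V) {p : Submodule K V}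
    (hp : p ≠ ⊥) (hfp : ∀ x ∈ p, f x ∈ p) : ∃ μ v, v ∈ p ∧ f.HasEigenvector μ v := by
  have : Nontrivial p := Submodule.nontrivial_iff_ne_bot.mpr hp
  obtain ⟨μ, hμ⟩ := exists_eigenvalue (f.restrict hfp)
  obtain ⟨v, hv⟩ := hμ.exists_hasEigenvector
  exact ⟨μ, v, v.2, eigenspace_restrict_le_eigenspace f hfp μ ⟨v, hv.1, rfl⟩,
    by simpa using hv.2⟩

theorem LinearMap.norm_apply_inv_norm_smul {E F : Type*} [NormedAddCommGroup E] [NormedSpace ℝ E]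
    [NormedAddCommGroup F] [NormedSpace ℝ F] (f : E →ₗ[ℝ] F) (x : E) :
    ‖f (‖x‖⁻¹ • x)‖ = ‖f x‖ / ‖x‖ := by
  rw [map_smul, norm_smul, norm_inv, norm_norm, inv_mul_eq_div]

variable {ι : Type*}

/-- The elements are the `x + i y` with `x, y ∈ S`; asking for the real parts of all complex
multiples makes closure under complex scaling immediate. -/
def complexification (S : Submodule ℝ (ι → ℝ)) : Submodule ℂ (ι → ℂ) where
  carrier := {w | ∀ c : ℂ, Complex.re ∘ (c • w) ∈ S}
  add_mem' {v w} hv hw c := by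
    convert S.add_mem (hv c) (hw c) using 1
    ext j
    simp
  zero_mem' c := by simp
  smul_mem' a w hw c := by simpa only [smul_smul] using hw (c * a)

theorem complexification_ne_bot {S : Submodule ℝ (ι → ℝ)} (hS : S ≠ ⊥) :
    complexification S ≠ ⊥ := by
  obtain ⟨x, hxS, hx⟩ := S.ne_bot_iff.mp hS
  refine (Submodule.ne_bot_iff _).mpr ⟨Complex.ofReal ∘ x, fun c => ?_, ?_⟩
  · convert S.smul_mem c.re hxS using 1
    ext j
    simp
  · intro h
    exact hx (funext fun j => by simpa using congrFun h j)

variable [Fintype ι]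

theorem norm_re_comp_le (z : ι → ℂ) : ‖Complex.re ∘ z‖ ≤ ‖z‖ :=
  (pi_norm_le_iff_of_nonneg (norm_nonneg z)).mpr fun j =>
    (Complex.abs_re_le_norm (z j)).trans (norm_le_pi_norm z j)

theorem exists_norm_eq_one_norm_re_comp_smul (z : ι → ℂ) :
    ∃ c : ℂ, ‖c‖ = 1 ∧ ‖Complex.re ∘ (c • z)‖ = ‖z‖ := by
  rcases isEmpty_or_nonempty ι with hι | hι
  · exact ⟨1, norm_one, by simp [Subsingleton.elim z 0]⟩
  obtain ⟨j, -, hj⟩ := Finset.univ.exists_max_image (fun i => ‖z i‖) Finset.univ_nonempty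
  obtain ⟨c, hc, hcz⟩ := Complex.exists_norm_eq_mul_self (z j)
  refine ⟨c, hc, le_antisymm ((norm_re_comp_le _).trans_eq ?_) ?_⟩
  · rw [norm_smul, hc, one_mul]
  calc ‖z‖ ≤ ‖z j‖ :=
        (pi_norm_le_iff_of_nonneg (norm_nonneg _)).mpr fun i => hj i (Finset.mem_univ i)
    _ = ‖(c * z j).re‖ := by rw [← hcz, Complex.ofReal_re, norm_norm]
    _ ≤ ‖Complex.re ∘ (c • z)‖ := norm_le_pi_norm (Complex.re ∘ (c • z)) j

variable [DecidableEq ι]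

theorem re_comp_toLin'_map (M : Matrix ι ι ℝ) (z : ι → ℂ) :
    Complex.re ∘ toLin' (M.map (algebraMap ℝ ℂ)) z = toLin' M (Complex.re ∘ z) := by
  ext j
  simp [mulVec, dotProduct, Complex.re_sum]

theorem re_comp_toLin'_map_pow (M : Matrix ι ι ℝ) (k : ℕ) (z : ι → ℂ) :
    Complex.re ∘ (toLin' (M.map (algebraMap ℝ ℂ)) ^ k) z = (toLin' M ^ k) (Complex.re ∘ z) := by
  induction k with
  | zero => rfl
  | succ k ih =>
    rw [pow_succ', Module.End.mul_apply, re_comp_toLin'_map, ih, ← Module.End.mul_apply,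
      ← pow_succ']

theorem mapsTo_complexification {M : Matrix ι ι ℝ} {S : Submodule ℝ (ι → ℝ)}
    (hS : ∀ x ∈ S, toLin' M x ∈ S) :
    ∀ w ∈ complexification S, toLin' (M.map (algebraMap ℝ ℂ)) w ∈ complexification S :=
  fun w hw c => by
    simpa only [← LinearMap.map_smul, re_comp_toLin'_map] using hS _ (hw c)

section Eigenvector

variable {L : Matrix ι ι ℝ} {S : Submodule ℝ (ι → ℝ)} {μ : ℂ} {w : ι → ℂ}

theorem toLin'_pow_re_comp_smul (hw : HasEigenvector (toLin' (L.map (algebraMap ℝ ℂ))) μ w)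
    (k : ℕ) (c : ℂ) :
    (toLin' L ^ k) (Complex.re ∘ (c • w)) = Complex.re ∘ ((μ ^ k * c) • w) := by
  rw [← re_comp_toLin'_map_pow, map_smul, hw.pow_apply, smul_smul, mul_comm]

theorem exists_norm_eq_one_pow_le_norm_toLin'_pow
    (hw : HasEigenvector (toLin' (L.map (algebraMap ℝ ℂ))) μ w) (hwS : w ∈ complexification S)
    (hμ : μ ≠ 0) (k : ℕ) : ∃ u ∈ S, ‖u‖ = 1 ∧ ‖μ‖ ^ k ≤ ‖(toLin' L ^ k) u‖ := by
  obtain ⟨c, hc1, hc⟩ := exists_norm_eq_one_norm_re_comp_smul (μ ^ k • w)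
  set x := Complex.re ∘ (c • w)
  have hPx : ‖(toLin' L ^ k) x‖ = ‖μ‖ ^ k * ‖w‖ := by
    rw [toLin'_pow_re_comp_smul hw, mul_comm, ← smul_smul, hc, norm_smul, norm_pow]
  have hx : ‖x‖ ≤ ‖w‖ := (norm_re_comp_le _).trans_eq (by rw [norm_smul, hc1, one_mul])
  have hx0 : x ≠ 0 := by
    rintro hx0
    rw [hx0, map_zero, norm_zero, eq_comm] at hPx
    exact mul_ne_zero (pow_ne_zero k (norm_ne_zero_iff.mpr hμ)) (norm_ne_zero_iff.mpr hw.2) hPx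
  refine ⟨‖x‖⁻¹ • x, S.smul_mem _ (hwS c), norm_smul_inv_norm hx0, ?_⟩
  rw [LinearMap.norm_apply_inv_norm_smul, le_div_iff₀ (norm_pos_iff.mpr hx0), hPx]
  gcongr

theorem exists_norm_eq_one_norm_toLin'_pow_le
    (hw : HasEigenvector (toLin' (L.map (algebraMap ℝ ℂ))) μ w) (hwS : w ∈ complexification S)
    (k : ℕ) : ∃ v ∈ S, ‖v‖ = 1 ∧ ‖(toLin' L ^ k) v‖ ≤ ‖μ‖ ^ k := by
  obtain ⟨c, hc1, hc⟩ := exists_norm_eq_one_norm_re_comp_smul w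
  set x := Complex.re ∘ (c • w)
  have hx0 : x ≠ 0 := norm_ne_zero_iff.mp (hc ▸ norm_ne_zero_iff.mpr hw.2)
  have hPx : ‖(toLin' L ^ k) x‖ ≤ ‖μ‖ ^ k * ‖x‖ := by
    rw [toLin'_pow_re_comp_smul hw, hc]
    exact (norm_re_comp_le _).trans_eq (by rw [norm_smul, norm_mul, hc1, norm_pow, mul_one])
  refine ⟨‖x‖⁻¹ • x, S.smul_mem _ (hwS c), norm_smul_inv_norm hx0, ?_⟩
  rwa [LinearMap.norm_apply_inv_norm_smul, div_le_iff₀ (norm_pos_iff.mpr hx0)]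

end Eigenvector

theorem same_modulus_no_domination_general
    {n : ℕ} (r : ℝ) (hr : 0 < r) (L : Matrix (Fin n) (Fin n) ℝ)
    (hmod : ∀ μ : ℂ, Module.End.eigenspace
      (Matrix.toLin' (L.map (algebraMap ℝ ℂ))) μ ≠ ⊥ → ‖μ‖ = r)
    (E F : Submodule ℝ (Fin n → ℝ)) (hE : E ≠ ⊥) (hF : F ≠ ⊥)
    (hEinv : ∀ x ∈ E, Matrix.toLin' L x ∈ E)
    (hFinv : ∀ x ∈ F, Matrix.toLin' L x ∈ F)
    (ℓ : ℕ) :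
    ∃ u ∈ E, ∃ v ∈ F, ‖u‖ = 1 ∧ ‖v‖ = 1 ∧
      ‖((Matrix.toLin' L) ^ ℓ) v‖ ≤ ‖((Matrix.toLin' L) ^ ℓ) u‖ := by
  obtain ⟨μ, w, hwE, hw⟩ := Module.End.exists_hasEigenvector_mem _
    (complexification_ne_bot hE) (mapsTo_complexification hEinv)
  obtain ⟨ν, w', hwF, hw'⟩ := Module.End.exists_hasEigenvector_mem _
    (complexification_ne_bot hF) (mapsTo_complexification hFinv)
  have hμ : ‖μ‖ = r := hmod μ (hasEigenvalue_of_hasEigenvector hw)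
  have hν : ‖ν‖ = r := hmod ν (hasEigenvalue_of_hasEigenvector hw')
  obtain ⟨u, huE, hu1, hu⟩ := exists_norm_eq_one_pow_le_norm_toLin'_pow hw hwE
    (norm_pos_iff.mp (hμ ▸ hr)) ℓ
  obtain ⟨v, hvF, hv1, hv⟩ := exists_norm_eq_one_norm_toLin'_pow_le hw' hwF ℓ
  exact ⟨u, huE, v, hvF, hu1, hv1, hv.trans (by rwa [hν, ← hμ])⟩

/-- If `L` is diagonalizable over `ℂ` with all eigenvalues of the same modulus
`r > 0`, then for any `L`-invariant decomposition `ℝⁿ = E ⊕ F` with `E, F ≠ 0`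
and any `ℓ ≥ 1` one has `‖Lˡ|_E‖ · ‖(Lˡ|_F)⁻¹‖ ≥ 1`; equivalently there are
unit vectors `u ∈ E`, `v ∈ F` with `‖Lˡ v‖ ≤ ‖Lˡ u‖`.  In particular no
`ℓ`-dominated splitting exists. -/
theorem same_modulus_no_domination
    {n : ℕ} (r : ℝ) (hr : 0 < r) (L : Matrix (Fin n) (Fin n) ℝ)
    (hdiag : ⨆ μ : ℂ, Module.End.eigenspace
      (Matrix.toLin' (L.map (algebraMap ℝ ℂ))) μ = ⊤)
    (hmod : ∀ μ : ℂ, Module.End.eigenspace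
      (Matrix.toLin' (L.map (algebraMap ℝ ℂ))) μ ≠ ⊥ → ‖μ‖ = r)
    (E F : Submodule ℝ (Fin n → ℝ)) (hE : E ≠ ⊥) (hF : F ≠ ⊥)
    (hcompl : IsCompl E F)
    (hEinv : ∀ x ∈ E, Matrix.toLin' L x ∈ E)
    (hFinv : ∀ x ∈ F, Matrix.toLin' L x ∈ F)
    (ℓ : ℕ) (hℓ : 1 ≤ ℓ) :
    ∃ u ∈ E, ∃ v ∈ F, ‖u‖ = 1 ∧ ‖v‖ = 1 ∧
      ‖((Matrix.toLin' L) ^ ℓ) v‖ ≤ ‖((Matrix.toLin' L) ^ ℓ) u‖ :=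
  same_modulus_no_domination_general r hr L hmod E F hE hF hEinv hFinv ℓ
end

section
/- Volume hyperbolicity from domination in the 2-bundle conservative linear case: let L ∈ SL(n,ℝ) admit an invariant splitting ℝⁿ = E ⊕ F with |det(Lˡ|_E)| · |det(Lˡ|_F)| = 1 for all ℓ (automatic since det L = ±1) and suppose there is ℓ with ‖Lˡ|_E‖ · ‖(Lˡ|_F)^{-1}‖ ≤ 1/2. Then there exists m ≥ 1 with |det(Lᵐ|_E)| < 1/2 and |det(L^{-m}|_F)| < 1/2. -/
open Module MeasureTheory Metric

section Helpers

lemma my_det_prodMap {M₁ M₂ : Type*} [AddCommGroup M₁] [Module ℝ M₁] [AddCommGroup M₂]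
    [Module ℝ M₂] [FiniteDimensional ℝ M₁] [FiniteDimensional ℝ M₂]
    (f : M₁ →ₗ[ℝ] M₁) (g : M₂ →ₗ[ℝ] M₂) :
    LinearMap.det (f.prodMap g) = LinearMap.det f * LinearMap.det g := by
  classical
  let b₁ := Module.finBasis ℝ M₁
  let b₂ := Module.finBasis ℝ M₂
  rw [← LinearMap.det_toMatrix (b₁.prod b₂), LinearMap.toMatrix_prodMap,
    Matrix.det_fromBlocks_zero₂₁, LinearMap.det_toMatrix, LinearMap.det_toMatrix]

lemma my_det_restrict_mul {V : Type*} [AddCommGroup V] [Module ℝ V] [FiniteDimensional ℝ V]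
    {E F : Submodule ℝ V} (hcompl : IsCompl E F) (f : V →ₗ[ℝ] V)
    (hE : ∀ x ∈ E, f x ∈ E) (hF : ∀ x ∈ F, f x ∈ F) :
    LinearMap.det (f.restrict hE) * LinearMap.det (f.restrict hF) = LinearMap.det f := by
  classical
  let e := Submodule.prodEquivOfIsCompl E F hcompl
  have key : f = (e : E × F →ₗ[ℝ] V) ∘ₗ ((f.restrict hE).prodMap (f.restrict hF))
      ∘ₗ (e.symm : V →ₗ[ℝ] E × F) := by
    apply LinearMap.ext
    intro x
    obtain ⟨p, rfl⟩ := e.surjective x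
    simp only [LinearMap.coe_comp, Function.comp_apply, LinearEquiv.coe_coe,
      LinearEquiv.symm_apply_apply]
    obtain ⟨u, v⟩ := p
    show f (e (u, v)) = e ((f.restrict hE u, f.restrict hF v))
    simp [e, Submodule.coe_prodEquivOfIsCompl', LinearMap.restrict_apply, map_add]
  conv_rhs => rw [key]
  rw [LinearMap.det_conj, my_det_prodMap]

lemma my_abs_det_le_pow_opNorm {V : Type*} [NormedAddCommGroup V] [NormedSpace ℝ V]
    [FiniteDimensional ℝ V] (f : V →L[ℝ] V) :
    |LinearMap.det (f : V →ₗ[ℝ] V)| ≤ ‖f‖ ^ (finrank ℝ V) := by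
  borelize V
  set d := finrank ℝ V with hd
  let b := Module.finBasis ℝ V
  let μ := b.addHaar
  have himg : (f : V →ₗ[ℝ] V) '' closedBall 0 1 ⊆ closedBall 0 ‖f‖ := by
    rintro - ⟨x, hx, rfl⟩
    simp only [mem_closedBall, dist_zero_right] at hx ⊢
    calc ‖f x‖ ≤ ‖f‖ * ‖x‖ := f.le_opNorm x
    _ ≤ ‖f‖ * 1 := by gcongr
    _ = ‖f‖ := mul_one _
  have h2 : μ ((f : V →ₗ[ℝ] V) '' closedBall 0 1)
      = ENNReal.ofReal |LinearMap.det (f : V →ₗ[ℝ] V)| * μ (closedBall 0 1) :=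
    Measure.addHaar_image_linearMap μ _ _
  have h3 : μ (closedBall 0 1) = μ (ball 0 1) := by
    rw [Measure.addHaar_closedBall μ 0 zero_le_one, one_pow, ENNReal.ofReal_one, one_mul]
  have h4 : μ (closedBall 0 ‖f‖) = ENNReal.ofReal (‖f‖ ^ d) * μ (ball 0 1) :=
    Measure.addHaar_closedBall μ 0 (norm_nonneg f)
  have hle : μ ((f : V →ₗ[ℝ] V) '' closedBall 0 1) ≤ μ (closedBall 0 ‖f‖) :=
    measure_mono himg
  rw [h2, h4, h3] at hle
  have hpos : μ (ball 0 1) ≠ 0 := (measure_ball_pos μ 0 one_pos).ne'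
  have hfin : μ (ball 0 1) ≠ ⊤ :=
    ((measure_mono ball_subset_closedBall).trans_lt (isCompact_closedBall 0 1).measure_lt_top).ne
  rw [ENNReal.mul_le_mul_iff_left hpos hfin] at hle
  exact (ENNReal.ofReal_le_ofReal_iff (by positivity)).mp hle

end Helpers

set_option maxHeartbeats 1000000

/-- Volume hyperbolicity from domination in the conservative case: if
`L ∈ SL(n,ℝ)` admits an invariant splitting `ℝⁿ = E ⊕ F` which is
`ℓ`-dominated for some `ℓ`, then some power `m` contracts volume on `E`
(`|det(Lᵐ|_E)| < 1/2`) and `L⁻¹` contracts volume on `F`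
(`|det(L⁻ᵐ|_F)| < 1/2`). -/
theorem volume_hyperbolic_of_dominated
    {n : ℕ}
    (L : EuclideanSpace ℝ (Fin n) ≃ₗ[ℝ] EuclideanSpace ℝ (Fin n))
    (hdet : |LinearMap.det (L : EuclideanSpace ℝ (Fin n) →ₗ[ℝ] EuclideanSpace ℝ (Fin n))| = 1)
    (E F : Submodule ℝ (EuclideanSpace ℝ (Fin n)))
    (hE : E ≠ ⊥) (hF : F ≠ ⊥) (hcompl : IsCompl E F)
    (hEinv : ∀ m : ℕ, ∀ x ∈ E,
      ((L : EuclideanSpace ℝ (Fin n) →ₗ[ℝ] EuclideanSpace ℝ (Fin n)) ^ m) x ∈ E)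
    (hFinv : ∀ m : ℕ, ∀ x ∈ F,
      ((L : EuclideanSpace ℝ (Fin n) →ₗ[ℝ] EuclideanSpace ℝ (Fin n)) ^ m) x ∈ F)
    (hFinv' : ∀ m : ℕ, ∀ x ∈ F,
      ((L.symm : EuclideanSpace ℝ (Fin n) →ₗ[ℝ] EuclideanSpace ℝ (Fin n)) ^ m) x ∈ F)
    (ℓ : ℕ) (hℓ : 1 ≤ ℓ)
    (hdom : ∀ u ∈ E, ∀ v ∈ F, ‖u‖ = 1 → ‖v‖ = 1 →
      ‖(((L : EuclideanSpace ℝ (Fin n) →ₗ[ℝ] EuclideanSpace ℝ (Fin n)) ^ ℓ)) u‖ ≤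
        (1 / 2) * ‖(((L : EuclideanSpace ℝ (Fin n) →ₗ[ℝ] EuclideanSpace ℝ (Fin n)) ^ ℓ)) v‖) :
    ∃ m : ℕ, 1 ≤ m ∧
      |LinearMap.det ((((L : EuclideanSpace ℝ (Fin n) →ₗ[ℝ] EuclideanSpace ℝ (Fin n)) ^ m)).restrict
        (hEinv m))| < 1 / 2 ∧
      |LinearMap.det ((((L.symm : EuclideanSpace ℝ (Fin n) →ₗ[ℝ] EuclideanSpace ℝ (Fin n)) ^ m)).restrict
        (hFinv' m))| < 1 / 2 := by
  classical
  set V := EuclideanSpace ℝ (Fin n) with hV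
  set T : V →ₗ[ℝ] V := (L : V →ₗ[ℝ] V) with hT
  set S : V →ₗ[ℝ] V := (L.symm : V →ₗ[ℝ] V) with hS
  have hTS : T * S = 1 := by
    ext x; simp [hT, hS, Module.End.mul_apply]
  have hST : S * T = 1 := by
    ext x; simp [hT, hS, Module.End.mul_apply]
  have hcomm : Commute T S := by
    rw [Commute, SemiconjBy, hTS, hST]
  have hTSpow : ∀ m : ℕ, (T ^ m) * (S ^ m) = 1 := fun m => by
    rw [← hcomm.mul_pow, hTS, one_pow]
  -- invariance for single maps
  have h1E : ∀ x ∈ E, T x ∈ E := fun x hx => by simpa using hEinv 1 x hx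
  have h1F : ∀ x ∈ F, T x ∈ F := fun x hx => by simpa using hFinv 1 x hx
  have h1F' : ∀ x ∈ F, S x ∈ F := fun x hx => by simpa using hFinv' 1 x hx
  -- dimensions
  haveI hEnt : Nontrivial E := Submodule.nontrivial_iff_ne_bot.mpr hE
  haveI hFnt : Nontrivial F := Submodule.nontrivial_iff_ne_bot.mpr hF
  have hdE : 0 < finrank ℝ E := finrank_pos
  have hdF : 0 < finrank ℝ F := finrank_pos
  -- base determinants
  set a : ℝ := |LinearMap.det (T.restrict h1E)| with ha_def
  set bb : ℝ := |LinearMap.det (T.restrict h1F)| with hb_def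
  have hab : a * bb = 1 := by
    rw [ha_def, hb_def, ← abs_mul, my_det_restrict_mul hcompl T h1E h1F, hdet]
  have ha_pos : 0 < a := by
    rcases mul_pos_iff.mp (hab ▸ one_pos) with ⟨h, _⟩ | ⟨h, _⟩
    · exact h
    · exact absurd h (not_lt.mpr (abs_nonneg _))
  have hbb_pos : 0 < bb := by
    rcases mul_pos_iff.mp (hab ▸ one_pos) with ⟨_, h⟩ | ⟨_, h⟩
    · exact h
    · exact absurd h (not_lt.mpr (abs_nonneg _))
  -- det of S restricted equals a
  have hSdet : |LinearMap.det (S.restrict h1F')| = a := by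
    have hcompid : (S.restrict h1F') ∘ₗ (T.restrict h1F) = LinearMap.id := by
      apply LinearMap.ext
      intro x
      apply Subtype.ext
      simp [LinearMap.restrict_apply, hT, hS]
    have hdet1 : LinearMap.det (S.restrict h1F') * LinearMap.det (T.restrict h1F) = 1 := by
      rw [← LinearMap.det_comp, hcompid, LinearMap.det_id]
    have habs : |LinearMap.det (S.restrict h1F')| * bb = 1 := by
      rw [hb_def, ← abs_mul, hdet1, abs_one]
    exact mul_right_cancel₀ hbb_pos.ne' (habs.trans hab.symm)
  -- level ℓ maps
  set A : E →ₗ[ℝ] E := (T ^ ℓ).restrict (hEinv ℓ) with hA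
  set B : F →ₗ[ℝ] F := (T ^ ℓ).restrict (hFinv ℓ) with hB
  set Bi : F →ₗ[ℝ] F := (S ^ ℓ).restrict (hFinv' ℓ) with hBi
  have hApow : A = (T.restrict h1E) ^ ℓ := (Module.End.pow_restrict ℓ h1E).symm
  have hBipow : Bi = (S.restrict h1F') ^ ℓ := (Module.End.pow_restrict ℓ h1F').symm
  have hdetA : |LinearMap.det A| = a ^ ℓ := by
    rw [hApow, map_pow, abs_pow, ha_def]
  have hdetBi : |LinearMap.det Bi| = a ^ ℓ := by
    rw [hBipow, map_pow, abs_pow, hSdet]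
  -- B ∘ Bi = id on F
  have hBBi : ∀ v : F, B (Bi v) = v := by
    intro v
    apply Subtype.ext
    have := congrArg (fun f : V →ₗ[ℝ] V => f (v : V)) (hTSpow ℓ)
    simpa [Module.End.mul_apply, hA, hB, hBi, LinearMap.restrict_coe_apply] using this
  -- continuous versions
  set A' : E →L[ℝ] E := LinearMap.toContinuousLinearMap A with hA'
  set Bi' : F →L[ℝ] F := LinearMap.toContinuousLinearMap Bi with hBi'
  have hA'app : ∀ u : E, A' u = A u := fun u => rfl
  have hBi'app : ∀ v : F, Bi' v = Bi v := fun v => rfl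
  -- key pointwise product bound
  have hAB : ∀ (u : E) (v : F), ‖A u‖ * ‖Bi v‖ ≤ 1 / 2 * (‖u‖ * ‖v‖) := by
    intro u v
    by_cases hu : u = 0
    · simp [hu]
    by_cases hv : v = 0
    · simp [hv]
    have hunorm : (0:ℝ) < ‖u‖ := norm_pos_iff.mpr hu
    have hvnorm : (0:ℝ) < ‖v‖ := norm_pos_iff.mpr hv
    have hBiv : Bi v ≠ 0 := by
      intro h0
      apply hv
      have := hBBi v
      rw [h0, map_zero] at this
      exact this.symm
    set t : ℝ := ‖Bi v‖ with ht_def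
    have ht : 0 < t := norm_pos_iff.mpr hBiv
    set u' : E := ‖u‖⁻¹ • u with hu'
    set v'' : F := t⁻¹ • (Bi v) with hv''
    have hu'norm : ‖u'‖ = 1 := by
      rw [hu', norm_smul, norm_inv, norm_norm, inv_mul_cancel₀ hunorm.ne']
    have hv''norm : ‖v''‖ = 1 := by
      rw [hv'', norm_smul, norm_inv, norm_norm, ← ht_def, inv_mul_cancel₀ ht.ne']
    have hkey := hdom (u' : V) u'.2 (v'' : V) v''.2 hu'norm hv''norm
    have hTu' : ((T ^ ℓ) (u' : V)) = ((A u' : E) : V) := (LinearMap.restrict_coe_apply _ _ _).symm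
    have hTv'' : ((T ^ ℓ) (v'' : V)) = ((B v'' : F) : V) := (LinearMap.restrict_coe_apply _ _ _).symm
    have hBv'' : B v'' = t⁻¹ • v := by
      rw [hv'', LinearMap.map_smul, hBBi v]
    rw [hTu', hTv'', hBv''] at hkey
    have h1 : ‖((A u' : E) : V)‖ = ‖u‖⁻¹ * ‖A u‖ := by
      rw [hu', LinearMap.map_smul]
      simp [norm_smul, abs_of_nonneg (inv_nonneg.mpr hunorm.le)]
    have h2 : ‖(((t⁻¹ • v : F) : F) : V)‖ = t⁻¹ * ‖v‖ := by
      have hco : (((t⁻¹ • v : F) : F) : V) = t⁻¹ • (v : V) := rfl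
      rw [hco, norm_smul, Real.norm_eq_abs, abs_of_nonneg (inv_nonneg.mpr ht.le)]
      rfl
    rw [h1, h2] at hkey
    -- hkey : ‖u‖⁻¹ * ‖A u‖ ≤ 1/2 * (t⁻¹ * ‖v‖)
    rw [inv_mul_le_iff₀ hunorm] at hkey
    have := mul_le_mul_of_nonneg_right hkey ht.le
    calc ‖A u‖ * t ≤ ‖u‖ * (1 / 2 * (t⁻¹ * ‖v‖)) * t := by
          exact mul_le_mul_of_nonneg_right (by linarith [hkey]) ht.le
    _ = 1 / 2 * (‖u‖ * ‖v‖) * (t⁻¹ * t) := by ring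
    _ = 1 / 2 * (‖u‖ * ‖v‖) := by rw [inv_mul_cancel₀ ht.ne', mul_one]
  -- operator norm product bound
  have hstep : ∀ v : F, ‖A'‖ * ‖Bi' v‖ ≤ 1 / 2 * ‖v‖ := by
    intro v
    rcases eq_or_lt_of_le (norm_nonneg (Bi' v)) with h0 | h0
    · rw [← h0, mul_zero]; positivity
    · have hb : ‖A'‖ ≤ (1 / 2 * ‖v‖) / ‖Bi' v‖ := by
        apply ContinuousLinearMap.opNorm_le_bound _ (by positivity)
        intro u
        rw [div_mul_eq_mul_div, le_div_iff₀ h0]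
        calc ‖A' u‖ * ‖Bi' v‖ = ‖A u‖ * ‖Bi v‖ := by rw [hA'app, hBi'app]
        _ ≤ 1 / 2 * (‖u‖ * ‖v‖) := hAB u v
        _ = 1 / 2 * ‖v‖ * ‖u‖ := by ring
      calc ‖A'‖ * ‖Bi' v‖ ≤ ((1 / 2 * ‖v‖) / ‖Bi' v‖) * ‖Bi' v‖ :=
            mul_le_mul_of_nonneg_right hb (norm_nonneg _)
      _ = 1 / 2 * ‖v‖ := div_mul_cancel₀ _ h0.ne'
  have hprod : ‖A'‖ * ‖Bi'‖ ≤ 1 / 2 := by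
    rcases eq_or_lt_of_le (norm_nonneg A') with h0 | h0
    · rw [← h0, zero_mul]; norm_num
    · have hb : ‖Bi'‖ ≤ (1 / 2) / ‖A'‖ := by
        apply ContinuousLinearMap.opNorm_le_bound _ (by positivity)
        intro v
        rw [div_mul_eq_mul_div, le_div_iff₀ h0]
        calc ‖Bi' v‖ * ‖A'‖ = ‖A'‖ * ‖Bi' v‖ := mul_comm _ _
        _ ≤ 1 / 2 * ‖v‖ := hstep v
      calc ‖A'‖ * ‖Bi'‖ ≤ ‖A'‖ * ((1 / 2) / ‖A'‖) :=
            mul_le_mul_of_nonneg_left hb (ContinuousLinearMap.opNorm_nonneg _)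
      _ = 1 / 2 := by rw [mul_comm]; exact div_mul_cancel₀ _ h0.ne'
  -- det bounds via the measure lemma
  have hdetA_le : |LinearMap.det A| ≤ ‖A'‖ ^ (finrank ℝ E) := by
    have := my_abs_det_le_pow_opNorm A'
    rwa [show ((A' : E →ₗ[ℝ] E)) = A from rfl] at this
  have hdetBi_le : |LinearMap.det Bi| ≤ ‖Bi'‖ ^ (finrank ℝ F) := by
    have := my_abs_det_le_pow_opNorm Bi'
    rwa [show ((Bi' : F →ₗ[ℝ] F)) = Bi from rfl] at this
  -- a < 1
  have ha1 : a < 1 := by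
    by_contra hge
    push_neg at hge
    have hge' : (1:ℝ) ≤ a ^ ℓ := by
      calc (1:ℝ) = 1 ^ ℓ := (one_pow ℓ).symm
      _ ≤ a ^ ℓ := pow_le_pow_left₀ (by norm_num) hge ℓ
    have hBi_norm : 1 ≤ ‖Bi'‖ := by
      by_contra h
      push_neg at h
      have hlt : ‖Bi'‖ ^ (finrank ℝ F) < 1 := pow_lt_one₀ (ContinuousLinearMap.opNorm_nonneg _) h hdF.ne'
      have : |LinearMap.det Bi| < 1 := lt_of_le_of_lt hdetBi_le hlt
      rw [hdetBi] at this
      linarith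
    have hA_norm : ‖A'‖ ≤ 1 / 2 := by
      nlinarith [ContinuousLinearMap.opNorm_nonneg A']
    have h5 : |LinearMap.det A| ≤ (1 / 2 : ℝ) ^ (finrank ℝ E) :=
      le_trans hdetA_le (pow_le_pow_left₀ (ContinuousLinearMap.opNorm_nonneg _) hA_norm _)
    have h6 : ((1:ℝ) / 2) ^ (finrank ℝ E) < 1 := pow_lt_one₀ (by norm_num) (by norm_num) hdE.ne'
    rw [hdetA] at h5
    linarith
  -- conclude
  obtain ⟨k, hk⟩ := exists_pow_lt_of_lt_one (by norm_num : (0:ℝ) < 1 / 2) ha1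
  have hk1 : 1 ≤ k := by
    rcases Nat.eq_zero_or_pos k with rfl | h
    · norm_num at hk
    · exact h
  refine ⟨k, hk1, ?_, ?_⟩
  · have heq : (T ^ k).restrict (hEinv k) = (T.restrict h1E) ^ k :=
      (Module.End.pow_restrict k h1E).symm
    rw [heq, map_pow, abs_pow, ← ha_def]
    exact hk
  · have heq : (S ^ k).restrict (hFinv' k) = (S.restrict h1F') ^ k :=
      (Module.End.pow_restrict k h1F').symm
    rw [heq, map_pow, abs_pow, hSdet]
    exact hk
end
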